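/- With Γ = ⟨α,β,γ⟩ ⊂ Diff(T⁷) as above, each of the four composite elements αβ, βγ, γα and αβγ acts freely on T⁷ (i.e., has no fixed points), while the fixed point set of each of α, β, γ is a disjoint union of 16 copies of T³. -/

import Mathlib

/-- The 7-torus `T⁷ = ℝ⁷/ℤ⁷`. -/
abbrev T7 : Type := Fin 7 → AddCircle (1 : ℝ)

/-- `α(x) = (x₁, x₂, x₃, −x₄, −x₅, −x₆, −x₇)` (coordinates mod 1, 0-indexed). -/
noncomputable def alphaT (x : T7) : T7 := ![x 0, x 1, x 2, -x 3, -x 4, -x 5, -x 6]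

/-- `β(x) = (x₁, −x₂, −x₃, x₄, x₅, ½−x₆, −x₇)`. -/
noncomputable def betaT (x : T7) : T7 :=
  ![x 0, -x 1, -x 2, x 3, x 4, ((1 / 2 : ℝ) : AddCircle (1 : ℝ)) - x 5, -x 6]

/-- `γ(x) = (−x₁, x₂, −x₃, x₄, ½−x₅, x₆, ½−x₇)`. -/
noncomputable def gammaT (x : T7) : T7 :=
  ![-x 0, x 1, -x 2, x 3, ((1 / 2 : ℝ) : AddCircle (1 : ℝ)) - x 4, x 5,
    ((1 / 2 : ℝ) : AddCircle (1 : ℝ)) - x 6]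

/-!
Each of `α`, `β`, `γ` is a coordinate reflection `xᵢ ↦ cᵢ - xᵢ` on four coordinates, fixing the
other three. Its fixed points are cut out by `xᵢ + xᵢ = cᵢ` on those four coordinates; each such
equation has exactly two solutions on the circle, so the fixed set is `2⁴ = 16` discrete choices
times the free `T³`. Each of `αβ`, `βγ`, `γα`, `αβγ` acts on some coordinate as translation by
`½`, hence has no fixed point.
-/

namespace AddCircle

variable {p : ℝ} [Fact (0 < p)]

theorem coe_half_period_ne_zero : ((p / 2 : ℝ) : AddCircle p) ≠ 0 := by
  intro h
  have := addOrderOf_period_div (p := p) (n := 2) two_pos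
  rw [Nat.cast_ofNat, h, addOrderOf_zero] at this
  exact absurd this (by norm_num)

theorem sub_half_period_ne_self (u : AddCircle p) : u - ((p / 2 : ℝ) : AddCircle p) ≠ u := by
  simpa [sub_eq_self] using coe_half_period_ne_zero

theorem half_period_add_ne_self (u : AddCircle p) : ((p / 2 : ℝ) : AddCircle p) + u ≠ u := by
  simpa [add_eq_right] using coe_half_period_ne_zero

theorem add_self_eq_coe_iff (u : AddCircle p) (t : ℝ) :
    u + u = t ↔ u = ((t / 2 : ℝ) : AddCircle p) ∨ u = ((t / 2 + p / 2 : ℝ) : AddCircle p) := by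
  have ht : ((t : ℝ) : AddCircle p) = 2 • ((t / 2 : ℝ) : AddCircle p) := by
    rw [← coe_nsmul, nsmul_eq_mul]; ring_nf
  rw [ht, ← two_nsmul, ← sub_eq_zero, ← nsmul_sub, AddCircle.nsmul_eq_zero_iff two_pos, coe_add]
  constructor
  · rintro ⟨m, hm, h⟩
    interval_cases m
    · left; simpa [sub_eq_zero] using h.symm
    · right; rw [eq_sub_iff_add_eq] at h; rw [← h, ← coe_add]; congr 1; push_cast; ring
  · rintro (h | h)
    · exact ⟨0, two_pos, by simp [h]⟩
    · exact ⟨1, one_lt_two, by rw [h, add_sub_cancel_left]; congr 1; push_cast; ring⟩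

theorem card_add_self_eq (c : AddCircle p) : Nat.card {u : AddCircle p // u + u = c} = 2 := by
  obtain ⟨t, rfl⟩ := QuotientAddGroup.mk_surjective c
  rw [Nat.card_eq_two_iff]
  refine ⟨⟨((t / 2 : ℝ) : AddCircle p), (add_self_eq_coe_iff _ t).2 (.inl rfl)⟩,
    ⟨((t / 2 + p / 2 : ℝ) : AddCircle p), (add_self_eq_coe_iff _ t).2 (.inr rfl)⟩, ?_, ?_⟩
  · intro h
    apply coe_half_period_ne_zero (p := p)
    simpa [coe_add] using congrArg Subtype.val h
  · ext ⟨u, hu⟩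
    simpa [Subtype.ext_iff] using (add_self_eq_coe_iff u t).1 hu

end AddCircle

section CoordReflection

variable {ι G : Type*} [DecidableEq ι]

def coordReflection [Sub G] (S : Finset ι) (c x : ι → G) : ι → G :=
  fun i => if i ∈ S then c i - x i else x i

theorem coordReflection_eq_self_iff [AddGroup G] (S : Finset ι) (c x : ι → G) :
    coordReflection S c x = x ↔ ∀ i ∈ S, x i + x i = c i := by
  simp only [funext_iff, coordReflection]
  refine forall_congr' fun i => ?_
  by_cases hi : i ∈ S
  · simp only [hi, if_true, forall_const]
    rw [sub_eq_iff_eq_add, eq_comm]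
  · simp [hi]

def Homeomorph.subtypeForallMemPi [TopologicalSpace G] (S : Finset ι) (P : ι → G → Prop) :
    {x : ι → G // ∀ i ∈ S, P i (x i)} ≃ₜ (∀ i : S, {y // P i y}) × ({i // i ∉ S} → G) where
  toFun x := (fun i => ⟨x.1 i, x.2 i i.2⟩, fun i => x.1 i)
  invFun q := ⟨fun i => if h : i ∈ S then (q.1 ⟨i, h⟩).1 else q.2 ⟨i, h⟩,
    fun i hi => by simpa [hi] using (q.1 ⟨i, hi⟩).2⟩
  left_inv x := by ext i; by_cases hi : i ∈ S <;> simp [hi]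
  right_inv q := by ext i <;> simp [i.2]
  continuous_toFun :=
    .prodMk (continuous_pi fun i => ((continuous_apply _).comp continuous_subtype_val).subtype_mk _)
      (continuous_pi fun i => (continuous_apply _).comp continuous_subtype_val)
  continuous_invFun := by
    refine .subtype_mk (continuous_pi fun i => ?_) _
    by_cases hi : i ∈ S <;> simp only [hi, dite_true, dite_false] <;> fun_prop

end CoordReflection

theorem nonempty_homeomorph_fixedPoints_coordReflection {ι : Type*} [Fintype ι] [DecidableEq ι]
    {p : ℝ} [Fact (0 < p)] (S : Finset ι) (c : ι → AddCircle p) :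
    Nonempty ({x // coordReflection S c x = x} ≃ₜ
      Fin (2 ^ S.card) × (Fin (Fintype.card ι - S.card) → AddCircle p)) := by
  have : ∀ i : S, Finite {y // y + y = c i} := fun i =>
    Nat.finite_of_card_ne_zero (by rw [AddCircle.card_add_self_eq]; norm_num)
  let eFix :
      {x // coordReflection S c x = x} ≃ₜ {x : ι → AddCircle p // ∀ i ∈ S, x i + x i = c i} :=
    (Homeomorph.refl _).subtype fun x => coordReflection_eq_self_iff S c x
  let eRoots : (∀ i : S, {y // y + y = c i}) ≃ₜ Fin (2 ^ S.card) :=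
    ((Finite.equivFin _).trans
      (finCongr (by rw [Nat.card_pi]; simp [AddCircle.card_add_self_eq]))).toHomeomorphOfDiscrete
  let eFree : ({i // i ∉ S} → AddCircle p) ≃ₜ (Fin (Fintype.card ι - S.card) → AddCircle p) :=
    Homeomorph.piCongrLeft (Y := fun _ => AddCircle p) <| Fintype.equivFinOfCardEq <| by
      rw [Fintype.card_subtype_compl (· ∈ S), Fintype.card_coe]
  exact ⟨eFix.trans <|
    (Homeomorph.subtypeForallMemPi S fun i y => y + y = c i).trans (eRoots.prodCongr eFree)⟩

theorem alphaT_eq_coordReflection : alphaT = coordReflection {3, 4, 5, 6} 0 := by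
  funext x i; fin_cases i <;> simp [alphaT, coordReflection]

theorem betaT_eq_coordReflection :
    betaT = coordReflection {1, 2, 5, 6}
      ![0, 0, 0, 0, 0, ((1 / 2 : ℝ) : AddCircle (1 : ℝ)), 0] := by
  funext x i; fin_cases i <;> simp [betaT, coordReflection]

theorem gammaT_eq_coordReflection :
    gammaT = coordReflection {0, 2, 4, 6}
      ![0, 0, 0, 0, ((1 / 2 : ℝ) : AddCircle (1 : ℝ)), 0, ((1 / 2 : ℝ) : AddCircle (1 : ℝ))] := by
  funext x i; fin_cases i <;> simp [gammaT, coordReflection]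

theorem alphaT_betaT_ne_self (x : T7) : alphaT (betaT x) ≠ x := fun h =>
  AddCircle.sub_half_period_ne_self (x 5) (by rw [← neg_sub]; exact congrFun h 5)

theorem betaT_gammaT_ne_self (x : T7) : betaT (gammaT x) ≠ x := fun h =>
  AddCircle.sub_half_period_ne_self (x 6) (by rw [← neg_sub]; exact congrFun h 6)

theorem gammaT_alphaT_ne_self (x : T7) : gammaT (alphaT x) ≠ x := fun h =>
  AddCircle.half_period_add_ne_self (x 4) (by rw [← sub_neg_eq_add]; exact congrFun h 4)

theorem alphaT_betaT_gammaT_ne_self (x : T7) : alphaT (betaT (gammaT x)) ≠ x := fun h =>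
  AddCircle.sub_half_period_ne_self (x 4) (by rw [← neg_sub]; exact congrFun h 4)

/-- The composite elements `αβ`, `βγ`, `γα` and `αβγ` of `Γ = ⟨α,β,γ⟩` act freely on
`T⁷`, while the fixed point set of each of `α`, `β`, `γ` is a disjoint union of 16
copies of `T³` (i.e. is homeomorphic to `Fin 16 × T³`). -/
theorem fixed_points_of_Gamma :
    (∀ x : T7, alphaT (betaT x) ≠ x) ∧
    (∀ x : T7, betaT (gammaT x) ≠ x) ∧
    (∀ x : T7, gammaT (alphaT x) ≠ x) ∧
    (∀ x : T7, alphaT (betaT (gammaT x)) ≠ x) ∧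
    Nonempty ({x : T7 // alphaT x = x} ≃ₜ (Fin 16 × (Fin 3 → AddCircle (1 : ℝ)))) ∧
    Nonempty ({x : T7 // betaT x = x} ≃ₜ (Fin 16 × (Fin 3 → AddCircle (1 : ℝ)))) ∧
    Nonempty ({x : T7 // gammaT x = x} ≃ₜ (Fin 16 × (Fin 3 → AddCircle (1 : ℝ)))) := by
  refine ⟨alphaT_betaT_ne_self, betaT_gammaT_ne_self, gammaT_alphaT_ne_self,
    alphaT_betaT_gammaT_ne_self, ?_, ?_, ?_⟩
  · rw [alphaT_eq_coordReflection]
    exact nonempty_homeomorph_fixedPoints_coordReflection (ι := Fin 7) (p := 1) _ _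
  · rw [betaT_eq_coordReflection]
    exact nonempty_homeomorph_fixedPoints_coordReflection (ι := Fin 7) (p := 1) _ _
  · rw [gammaT_eq_coordReflection]
    exact nonempty_homeomorph_fixedPoints_coordReflection (ι := Fin 7) (p := 1) _ _
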